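/- arXiv:0807.2952 — 3 statements merged into one kernel-verified Lean document; each statement's English description precedes it below -/
import Mathlib

section
/- Assume the drift condition: there exist a measurable V : X → [1,∞), a measurable set C ⊆ X, constants b, c > 0 and 0 < α ≤ 1 such that P_θV ≤ V − c V^{1−α} + b·1_C for every θ ∈ Θ. Then there exists a constant b̄ < ∞ (depending only on b, c, α) such that for every j ≥ 0, every 0 ≤ β ≤ 1, every l ≥ 0 and every (x,θ) ∈ X × Θ, E^{(l)}_{x,θ}[V^β(X_j)] ≤ V^β(x) + b̄ j^β. -/
open MeasureTheory ProbabilityTheory Filter Set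
open scoped ENNReal NNReal Classical

noncomputable section

namespace AdaptiveMCMC

variable {X Θ : Type*} [MeasurableSpace X] [MeasurableSpace Θ]

/-- The `W`-weighted norm distance between two measures:
`‖μ − ν‖_W = sup { |μ(g) − ν(g)| : g measurable, |g| ≤ W }`. -/
def wDist (W : X → ℝ) (μ ν : Measure X) : ℝ :=
  ⨆ g : {g : X → ℝ // Measurable g ∧ ∀ x, |g x| ≤ W x},
    |(∫ x, g.1 x ∂μ) - ∫ x, g.1 x ∂ν|

/-- Total variation distance `‖μ − ν‖_TV = sup { |μ(f) − ν(f)| : |f| ≤ 1 }`. -/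
def tvDist (μ ν : Measure X) : ℝ := wDist (fun _ => 1) μ ν

/-- `D(θ,θ') = sup_x ‖P_θ(x,·) − P_θ'(x,·)‖_TV`. -/
def Dtv (P : Θ → Kernel X X) (θ θ' : Θ) : ℝ := ⨆ x : X, tvDist (P θ x) (P θ' x)

/-- Iterates `P^n` of a kernel. -/
def kpow (P : Kernel X X) : ℕ → Kernel X X
  | 0 => Kernel.id
  | n + 1 => (kpow P n) ∘ₖ P

/-- Prepend a state to a path. -/
def prepend {α : Type*} (z : α) (ω : ℕ → α) : ℕ → α
  | 0 => z
  | n + 1 => ω n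

/-- `law l (x,θ)` is the law `P^{(l)}_{x,θ}` of the canonical nonhomogeneous Markov chain
`{Z_n = (X_n, θ_n)}` started at `(x,θ)` whose `n`-th transition kernel is `P̄(l+n)`. -/
structure IsAdaptiveLaw (Pbar : ℕ → Kernel (X × Θ) (X × Θ))
    (law : ℕ → X × Θ → Measure (ℕ → X × Θ)) : Prop where
  prob : ∀ l z, IsProbabilityMeasure (law l z)
  meas : ∀ l, Measurable (law l)
  step : ∀ l z, law l z = (Pbar l z).bind fun z' => (law (l + 1) z').map (prepend z)

/-- The marginal compatibility `∫_{A×Θ} P̄(n;(x,θ);(dx',dθ')) = P_θ(x,A)`. -/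
def Compat (P : Θ → Kernel X X) (Pbar : ℕ → Kernel (X × Θ) (X × Θ)) : Prop :=
  ∀ (n : ℕ) (x : X) (θ : Θ) (A : Set X), MeasurableSet A →
    Pbar n (x, θ) (A ×ˢ (Set.univ : Set Θ)) = P θ x A

/-- Law of the chain with initial distribution `ξ1 ⊗ ξ2` (and `l = 0`). -/
def chainLaw (law : ℕ → X × Θ → Measure (ℕ → X × Θ)) (ξ1 : Measure X) (ξ2 : Measure Θ) :
    Measure (ℕ → X × Θ) :=
  (ξ1.prod ξ2).bind (law 0)

/-- Return time `τ_C = inf {n ≥ 1 : X_n ∈ C}` (equal to `⊤` if no such `n`). -/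
def hitTime (C : Set X) (ω : ℕ → X × Θ) : ℕ∞ :=
  ⨅ m : {m : ℕ // 1 ≤ m ∧ (ω m).1 ∈ C}, (m.1 : ℕ∞)

/-- Evaluation of `r : ℕ → ℝ` at an extended natural, with value `∞` at `∞`. -/
def rEval (r : ℕ → ℝ) : ℕ∞ → ℝ≥0∞ := fun t =>
  if t = ⊤ then ⊤ else ENNReal.ofReal (r t.toNat)

end AdaptiveMCMC

/-! Under the drift condition every `P_θ` satisfies `P_θ V ≤ V + b`, and by marginal
compatibility this bound is inherited by the `X`-component of each transition of the adaptive
chain, whatever the parameter does; iterating gives `E[V(X_j)] ≤ V(x) + b j`. The modulated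
moment then follows from Jensen's inequality for the concave map `t ↦ t^β` and the
subadditivity `(s + t)^β ≤ s^β + t^β`. -/

theorem MeasureTheory.lintegral_rpow_le_rpow_lintegral {Ω : Type*} [MeasurableSpace Ω]
    {μ : Measure Ω} [IsProbabilityMeasure μ] {f : Ω → ℝ≥0∞} (hf : AEMeasurable f μ)
    {β : ℝ} (hβ0 : 0 ≤ β) (hβ1 : β ≤ 1) :
    ∫⁻ ω, f ω ^ β ∂μ ≤ (∫⁻ ω, f ω ∂μ) ^ β := by
  simpa [hβ1] using ENNReal.lintegral_mul_norm_pow_le (g := fun _ => 1) hf aemeasurable_const hβ0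
    (sub_nonneg.2 hβ1) (add_sub_cancel β 1)

namespace AdaptiveMCMC

theorem ofReal_drift_le {X : Type*} {v c b α : ℝ} {C : Set X} {x : X} (hv : 0 ≤ v) (hc : 0 ≤ c) :
    ENNReal.ofReal (v - c * v ^ (1 - α) + b * C.indicator (fun _ => (1 : ℝ)) x) ≤
      ENNReal.ofReal v + ENNReal.ofReal b := by
  have hdecay : 0 ≤ c * v ^ (1 - α) := mul_nonneg hc (Real.rpow_nonneg hv _)
  have hsmall : ENNReal.ofReal (b * C.indicator (fun _ => (1 : ℝ)) x) ≤ ENNReal.ofReal b := by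
    by_cases hx : x ∈ C <;> simp [hx]
  calc ENNReal.ofReal (v - c * v ^ (1 - α) + b * C.indicator (fun _ => (1 : ℝ)) x)
      ≤ ENNReal.ofReal (v + b * C.indicator (fun _ => (1 : ℝ)) x) :=
        ENNReal.ofReal_le_ofReal (by linarith)
    _ ≤ ENNReal.ofReal v + ENNReal.ofReal (b * C.indicator (fun _ => (1 : ℝ)) x) :=
        ENNReal.ofReal_add_le
    _ ≤ ENNReal.ofReal v + ENNReal.ofReal b := by gcongr

theorem ofReal_rpow_le_ofReal_max_one (b : ℝ) {β : ℝ} (hβ0 : 0 ≤ β) (hβ1 : β ≤ 1) :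
    ENNReal.ofReal b ^ β ≤ ENNReal.ofReal (max b 1) :=
  calc ENNReal.ofReal b ^ β ≤ ENNReal.ofReal (max b 1) ^ β := by gcongr; exact le_max_left b 1
    _ ≤ ENNReal.ofReal (max b 1) ^ (1 : ℝ) :=
        ENNReal.rpow_le_rpow_of_exponent_le (ENNReal.one_le_ofReal.2 (le_max_right b 1)) hβ1
    _ = ENNReal.ofReal (max b 1) := ENNReal.rpow_one _

section Chain

variable {X Θ : Type*} [MeasurableSpace X] [MeasurableSpace Θ]

theorem measurable_prepend {α : Type*} [MeasurableSpace α] (z : α) :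
    Measurable (prepend z) := by
  refine measurable_pi_lambda _ fun n => ?_
  cases n with
  | zero => exact measurable_const
  | succ n => exact measurable_pi_apply n

theorem Compat.map_fst {P : Θ → Kernel X X} {Pbar : ℕ → Kernel (X × Θ) (X × Θ)}
    (hcompat : Compat P Pbar) (n : ℕ) (x : X) (θ : Θ) :
    (Pbar n (x, θ)).map Prod.fst = P θ x := by
  ext A hA
  rw [Measure.map_apply measurable_fst hA, ← hcompat n x θ A hA, Set.prod_univ]

namespace IsAdaptiveLaw

variable {Pbar : ℕ → Kernel (X × Θ) (X × Θ)} {law : ℕ → X × Θ → Measure (ℕ → X × Θ)}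

theorem lintegral_eq (hlaw : IsAdaptiveLaw Pbar law) (l : ℕ) (z : X × Θ)
    {f : (ℕ → X × Θ) → ℝ≥0∞} (hf : Measurable f) :
    ∫⁻ ω, f ω ∂law l z = ∫⁻ z', ∫⁻ ω, f (prepend z ω) ∂law (l + 1) z' ∂Pbar l z := by
  have hmap : Measurable fun z' => (law (l + 1) z').map (prepend z) :=
    (Measure.measurable_map _ (measurable_prepend z)).comp (hlaw.meas (l + 1))
  rw [hlaw.step l z, Measure.lintegral_bind hmap.aemeasurable hf.aemeasurable]
  exact lintegral_congr fun z' => lintegral_map hf (measurable_prepend z)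

theorem lintegral_eval_zero (hlaw : IsAdaptiveLaw Pbar law) [∀ n, IsMarkovKernel (Pbar n)]
    (l : ℕ) (z : X × Θ) {g : X × Θ → ℝ≥0∞} (hg : Measurable g) :
    ∫⁻ ω, g (ω 0) ∂law l z = g z := by
  rw [hlaw.lintegral_eq l z (f := fun ω => g (ω 0)) (hg.comp (measurable_pi_apply 0))]
  have := hlaw.prob (l + 1)
  simp [prepend]

theorem lintegral_eval_succ (hlaw : IsAdaptiveLaw Pbar law) (j l : ℕ) (z : X × Θ)
    {g : X × Θ → ℝ≥0∞} (hg : Measurable g) :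
    ∫⁻ ω, g (ω (j + 1)) ∂law l z = ∫⁻ z', ∫⁻ ω, g (ω j) ∂law (l + 1) z' ∂Pbar l z :=
  hlaw.lintegral_eq l z (f := fun ω => g (ω (j + 1))) (hg.comp (measurable_pi_apply (j + 1)))

theorem lintegral_le_add_mul (hlaw : IsAdaptiveLaw Pbar law) [∀ n, IsMarkovKernel (Pbar n)]
    {P : Θ → Kernel X X} (hcompat : Compat P Pbar) {W : X → ℝ≥0∞} (hW : Measurable W)
    {B : ℝ≥0∞} (hdrift : ∀ θ x, ∫⁻ y, W y ∂P θ x ≤ W x + B) (j : ℕ) :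
    ∀ l x θ, ∫⁻ ω, W (ω j).1 ∂law l (x, θ) ≤ W x + j * B := by
  induction j with
  | zero =>
    intro l x θ
    rw [hlaw.lintegral_eval_zero l (x, θ) (g := fun z => W z.1) (hW.comp measurable_fst)]
    simp
  | succ j ih =>
    intro l x θ
    calc ∫⁻ ω, W (ω (j + 1)).1 ∂law l (x, θ)
        = ∫⁻ z', ∫⁻ ω, W (ω j).1 ∂law (l + 1) z' ∂Pbar l (x, θ) :=
          hlaw.lintegral_eval_succ j l (x, θ) (g := fun z => W z.1) (hW.comp measurable_fst)
      _ ≤ ∫⁻ z', (W z'.1 + j * B) ∂Pbar l (x, θ) := lintegral_mono fun z' => ih (l + 1) z'.1 z'.2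
      _ = ∫⁻ y, W y ∂P θ x + j * B := by
          rw [lintegral_add_right _ measurable_const, lintegral_const, measure_univ, mul_one,
            ← hcompat.map_fst l x θ, lintegral_map hW measurable_fst]
      _ ≤ W x + B + j * B := by gcongr; exact hdrift θ x
      _ = W x + ↑(j + 1) * B := by push_cast; ring

end IsAdaptiveLaw

end Chain

theorem modulated_moment_bound_general
    {X Θ : Type*} [MeasurableSpace X] [MeasurableSpace Θ]
    (P : Θ → Kernel X X)
    (Pbar : ℕ → Kernel (X × Θ) (X × Θ)) (hPbarm : ∀ n, IsMarkovKernel (Pbar n))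
    (hcompat : Compat P Pbar)
    (law : ℕ → X × Θ → Measure (ℕ → X × Θ)) (hlaw : IsAdaptiveLaw Pbar law)
    (V : X → ℝ) (hVmeas : Measurable V) (hV1 : ∀ x, 1 ≤ V x)
    (C : Set X)
    (α b c : ℝ) (hc : 0 < c)
    (hdrift : ∀ (θ : Θ) (x : X),
        (∫⁻ y, ENNReal.ofReal (V y) ∂(P θ x)) ≤
          ENNReal.ofReal (V x - c * V x ^ (1 - α) + b * C.indicator (fun _ => (1 : ℝ)) x)) :
    ∃ bb : ℝ, ∀ (j : ℕ) (β : ℝ), 0 ≤ β → β ≤ 1 → ∀ (l : ℕ) (x : X) (θ : Θ),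
      (∫⁻ ω, ENNReal.ofReal (V ((ω j).1) ^ β) ∂(law l (x, θ))) ≤
        ENNReal.ofReal (V x ^ β + bb * (j : ℝ) ^ β) := by
  refine ⟨max b 1, fun j β hβ0 hβ1 l x θ => ?_⟩
  have hV0 : ∀ x, 0 ≤ V x := fun x => zero_le_one.trans (hV1 x)
  have hmoment := hlaw.lintegral_le_add_mul hcompat hVmeas.ennreal_ofReal
    (fun θ x => (hdrift θ x).trans (ofReal_drift_le (hV0 x) hc.le)) j l x θ
  have := hlaw.prob l (x, θ)
  calc ∫⁻ ω, ENNReal.ofReal (V (ω j).1 ^ β) ∂law l (x, θ)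
      = ∫⁻ ω, ENNReal.ofReal (V (ω j).1) ^ β ∂law l (x, θ) := by
        simp_rw [ENNReal.ofReal_rpow_of_nonneg (hV0 _) hβ0]
    _ ≤ (∫⁻ ω, ENNReal.ofReal (V (ω j).1) ∂law l (x, θ)) ^ β :=
        lintegral_rpow_le_rpow_lintegral
          (hVmeas.comp (measurable_fst.comp (measurable_pi_apply j))).ennreal_ofReal.aemeasurable
          hβ0 hβ1
    _ ≤ (ENNReal.ofReal (V x) + j * ENNReal.ofReal b) ^ β := by gcongr
    _ ≤ ENNReal.ofReal (V x) ^ β + (j : ℝ≥0∞) ^ β * ENNReal.ofReal b ^ β := by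
        rw [← ENNReal.mul_rpow_of_nonneg _ _ hβ0]
        exact ENNReal.rpow_add_le_add_rpow _ _ hβ0 hβ1
    _ ≤ ENNReal.ofReal (V x ^ β) + ENNReal.ofReal ((j : ℝ) ^ β) * ENNReal.ofReal (max b 1) := by
        rw [ENNReal.ofReal_rpow_of_nonneg (hV0 x) hβ0, ← ENNReal.ofReal_natCast,
          ENNReal.ofReal_rpow_of_nonneg (Nat.cast_nonneg j) hβ0]
        gcongr
        exact ofReal_rpow_le_ofReal_max_one b hβ0 hβ1
    _ = ENNReal.ofReal (V x ^ β + max b 1 * (j : ℝ) ^ β) := by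
        rw [← ENNReal.ofReal_mul (by positivity), ← ENNReal.ofReal_add (Real.rpow_nonneg (hV0 x) β)
          (by positivity), mul_comm]

/-- Proposition 4.5(i): modulated moments of the adaptive chain under the drift condition. -/
theorem modulated_moment_bound
    {X Θ : Type*} [MeasurableSpace X] [MeasurableSpace Θ]
    (P : Θ → Kernel X X) (hPm : ∀ θ, IsMarkovKernel (P θ))
    (hPθmeas : ∀ (x : X) (A : Set X), MeasurableSet A → Measurable fun θ => P θ x A)
    (Pbar : ℕ → Kernel (X × Θ) (X × Θ)) (hPbarm : ∀ n, IsMarkovKernel (Pbar n))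
    (hcompat : Compat P Pbar)
    (law : ℕ → X × Θ → Measure (ℕ → X × Θ)) (hlaw : IsAdaptiveLaw Pbar law)
    (V : X → ℝ) (hVmeas : Measurable V) (hV1 : ∀ x, 1 ≤ V x)
    (C : Set X) (hCmeas : MeasurableSet C)
    (α b c : ℝ) (hα0 : 0 < α) (hα1 : α ≤ 1) (hb : 0 < b) (hc : 0 < c)
    (hdrift : ∀ (θ : Θ) (x : X),
        (∫⁻ y, ENNReal.ofReal (V y) ∂(P θ x)) ≤
          ENNReal.ofReal (V x - c * V x ^ (1 - α) + b * C.indicator (fun _ => (1 : ℝ)) x)) :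
    ∃ bb : ℝ, ∀ (j : ℕ) (β : ℝ), 0 ≤ β → β ≤ 1 → ∀ (l : ℕ) (x : X) (θ : Θ),
      (∫⁻ ω, ENNReal.ofReal (V ((ω j).1) ^ β) ∂(law l (x, θ))) ≤
        ENNReal.ofReal (V x ^ β + bb * (j : ℝ) ^ β) :=
  modulated_moment_bound_general P Pbar hPbarm hcompat law hlaw V hVmeas hV1 C α b c hc hdrift

end AdaptiveMCMC
end
end

section
/- Assume the drift condition: there exist a measurable V : X → [1,∞), a measurable set C ⊆ X, constants b, c > 0 and 0 < α ≤ 1 such that P_θV ≤ V − c V^{1−α} + b·1_C for every θ ∈ Θ. Then there exists a constant b̄ < ∞ (depending only on b, c, α) such that for every 0 ≤ β ≤ 1 − α, 0 < a < 1, every q ∈ [1,∞] (with the convention 1/q = 0 when q = ∞), every l ≥ 0, (x,θ) ∈ X × Θ, and every stopping time τ of the natural filtration, E^{(l)}_{x,θ}[ Σ_{j=0}^{τ−1} (1−a)^j V^β(X_j) ] ≤ a^{1/q − 1} (1−a)^{−1/q} (αc)^{−1/q} V^{β+α/q}(x) · ( 1 + b̄ E^{(l)}_{x,θ}[ Σ_{j=0}^{τ−1}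 (1−a)^j 1_C(X_j) ] ). -/
open MeasureTheory ProbabilityTheory Filter Set
open scoped ENNReal NNReal Classical

noncomputable section

namespace AdaptiveMCMC

variable {X Θ : Type*} [MeasurableSpace X] [MeasurableSpace Θ]

/-- The natural filtration `F_k = σ(Z_0,…,Z_k)` on the canonical path space. -/
def pathFiltration (X Θ : Type*) [MeasurableSpace X] [MeasurableSpace Θ] (k : ℕ) :
    MeasurableSpace (ℕ → X × Θ) :=
  MeasurableSpace.comap (fun ω (i : Fin (k + 1)) => ω i.1) inferInstance

/-- `τ` is a stopping time for the natural filtration of the canonical chain. -/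
def IsPathStoppingTime (τ : (ℕ → X × Θ) → ℕ∞) : Prop :=
  ∀ k : ℕ, MeasurableSet[pathFiltration X Θ k] {ω | τ ω = (k : ℕ∞)}

end AdaptiveMCMC

/-!
Raising the drift to the power `η = β + α/q` and using the tangent line of the concave map
`t ↦ t^η` gives a drift inequality on the joint chain,
`P̄ V^η + η c V^(η-α) ≤ V^η + b 1_C`.
Multiplying the `j`-th instance of it by `(1-a)^j` and summing along the chain up to the
stopping time telescopes (an induction on the horizon, using the Markov property at time one
and the shifted stopping time), so that
`E Σ_{j<τ} (1-a)^j (a V^η + (1-a) η c V^(η-α))(X_j) ≤ V^η(x) + b E Σ_{j<τ} (1-a)^j 1_C(X_j)`.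
Finally, Young's inequality bounds `V^β` pointwise by
`a^(1/q-1) (1-a)^(-1/q) (αc)^(-1/q) (a V^η + (1-a) η c V^(η-α))`.
-/

namespace AdaptiveMCMC

lemma rpow_le_tangent_line {u v η : ℝ} (hu : 0 < u) (hv : 0 ≤ v) (hη0 : 0 ≤ η) (hη1 : η ≤ 1) :
    v ^ η ≤ (1 - η) * u ^ η + η * u ^ (η - 1) * v := by
  have hbern := rpow_one_add_le_one_add_mul_self (s := v / u - 1)
    (by linarith [div_nonneg hv hu.le]) hη0 hη1
  rw [add_sub_cancel, Real.div_rpow hv hu.le, div_le_iff₀ (Real.rpow_pos_of_pos hu η)] at hbern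
  rw [Real.rpow_sub_one hu.ne']
  calc v ^ η ≤ (1 + η * (v / u - 1)) * u ^ η := hbern
    _ = (1 - η) * u ^ η + η * (u ^ η / u) * v := by field_simp; ring

lemma young_rpow_le {a α c β s v : ℝ} (ha0 : 0 < a) (ha1 : a < 1) (hα : 0 < α) (hc : 0 < c)
    (hβ : 0 ≤ β) (hs0 : 0 ≤ s) (hs1 : s ≤ 1) (hv : 0 < v) :
    v ^ β ≤ a ^ (s - 1) * (1 - a) ^ (-s) * (α * c) ^ (-s) *
      (a * v ^ (β + α * s) + (1 - a) * ((β + α * s) * c * v ^ (β + α * s - α))) := by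
  have h1a : 0 < 1 - a := by linarith
  have hαc : 0 < α * c := mul_pos hα hc
  set η := β + α * s
  set M := a ^ (1 - s) * (1 - a) ^ s * (α * c) ^ s
  have hM : 0 < M := by positivity
  have hA : a ^ (s - 1) * (1 - a) ^ (-s) * (α * c) ^ (-s) = M⁻¹ := by
    rw [show s - 1 = -(1 - s) by ring, Real.rpow_neg ha0.le, Real.rpow_neg h1a.le,
      Real.rpow_neg hαc.le, mul_inv, mul_inv]
  have hamgm := Real.geom_mean_le_arith_mean2_weighted hs0 (sub_nonneg.2 hs1)
    (by positivity : 0 ≤ (1 - a) * (α * c) * v ^ (η - α)) (by positivity : 0 ≤ a * v ^ η)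
    (add_sub_cancel s 1)
  have hgeom : ((1 - a) * (α * c) * v ^ (η - α)) ^ s * (a * v ^ η) ^ (1 - s) = M * v ^ β := by
    rw [Real.mul_rpow (by positivity) (by positivity), Real.mul_rpow h1a.le hαc.le,
      Real.mul_rpow ha0.le (by positivity), ← Real.rpow_mul hv.le, ← Real.rpow_mul hv.le]
    have hexp : v ^ ((η - α) * s) * v ^ (η * (1 - s)) = v ^ β := by
      rw [← Real.rpow_add hv]; congr 1; ring
    rw [← hexp]; ring
  have harith : s * ((1 - a) * (α * c) * v ^ (η - α)) + (1 - s) * (a * v ^ η) ≤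
      a * v ^ η + (1 - a) * (η * c * v ^ (η - α)) := by
    have hsα : s * α ≤ η := by nlinarith
    have hvη : 0 ≤ a * v ^ η := by positivity
    nlinarith [mul_le_mul_of_nonneg_right hsα (by positivity : 0 ≤ (1 - a) * c * v ^ (η - α))]
  rw [hA, le_inv_mul_iff₀ hM]
  linarith

-- The right side is written with `r = ofReal (1 - a)`, in the shape of the weights
-- `r^j ((1 - r) W + r g)` of `lintegral_tsum_discounted_le_of_drift`.
lemma ofReal_pow_mul_rpow_le_young {a α c β s v : ℝ} (ha0 : 0 < a) (ha1 : a < 1) (hα : 0 < α)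
    (hc : 0 < c) (hβ : 0 ≤ β) (hs0 : 0 ≤ s) (hs1 : s ≤ 1) (hv : 0 < v) (j : ℕ) :
    ENNReal.ofReal ((1 - a) ^ j * v ^ β) ≤
      ENNReal.ofReal (a ^ (s - 1) * (1 - a) ^ (-s) * (α * c) ^ (-s)) *
        (ENNReal.ofReal (1 - a) ^ j *
          ((1 - ENNReal.ofReal (1 - a)) * ENNReal.ofReal (v ^ (β + α * s)) +
            ENNReal.ofReal (1 - a) * ENNReal.ofReal ((β + α * s) * c * v ^ (β + α * s - α)))) := by
  have h1a : 0 ≤ 1 - a := by linarith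
  rw [ENNReal.ofReal_mul (by positivity), ENNReal.ofReal_pow h1a, mul_left_comm]
  gcongr
  rw [← ENNReal.ofReal_one, ← ENNReal.ofReal_sub _ h1a, sub_sub_cancel,
    ← ENNReal.ofReal_mul ha0.le, ← ENNReal.ofReal_mul h1a,
    ← ENNReal.ofReal_add (by positivity) (mul_nonneg h1a (by positivity)),
    ← ENNReal.ofReal_mul (by positivity)]
  exact ENNReal.ofReal_le_ofReal (young_rpow_le ha0 ha1 hα hc hβ hs0 hs1 hv)

section PathFunctionals

variable {X Θ : Type*}

def shiftStop (τ : (ℕ → X × Θ) → ℕ∞) (z : X × Θ) : (ℕ → X × Θ) → ℕ∞ :=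
  fun ω => τ (prepend z ω) - 1

def discountedSum (τ : (ℕ → X × Θ) → ℕ∞) (r : ℝ≥0∞) (f : X × Θ → ℝ≥0∞) (n : ℕ)
    (ω : ℕ → X × Θ) : ℝ≥0∞ :=
  ∑ j ∈ Finset.range n, if (j : ℕ∞) < τ ω then r ^ j * f (ω j) else 0

variable {τ : (ℕ → X × Θ) → ℕ∞} {r : ℝ≥0∞} {f : X × Θ → ℝ≥0∞}

lemma discountedSum_of_eq_zero {ω : ℕ → X × Θ} (h : τ ω = 0) (n : ℕ) :
    discountedSum τ r f n ω = 0 :=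
  Finset.sum_eq_zero fun j _ => by simp [h]

lemma discountedSum_succ_prepend {z : X × Θ} {ω : ℕ → X × Θ} (h : τ (prepend z ω) ≠ 0)
    (n : ℕ) :
    discountedSum τ r f (n + 1) (prepend z ω) =
      f z + r * discountedSum (shiftStop τ z) r f n ω := by
  rw [discountedSum, Finset.sum_range_succ', discountedSum, Finset.mul_sum, add_comm]
  congr 1
  · simp [pos_iff_ne_zero.2 h, prepend]
  · refine Finset.sum_congr rfl fun j _ => ?_
    have hlt : ((j + 1 : ℕ) : ℕ∞) < τ (prepend z ω) ↔ (j : ℕ∞) < shiftStop τ z ω := by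
      rw [shiftStop, lt_tsub_iff_right, Nat.cast_succ]
    simp only [hlt, prepend, pow_succ']
    split_ifs <;> simp [mul_assoc]

end PathFunctionals

variable {X Θ : Type*} [MeasurableSpace X] [MeasurableSpace Θ]

lemma lintegral_rpow_le_tangent_line {μ : Measure X} [IsProbabilityMeasure μ] {V : X → ℝ}
    (hV : Measurable V) (hV0 : ∀ y, 0 ≤ V y) {u η : ℝ} (hu : 0 < u) (hη0 : 0 ≤ η)
    (hη1 : η ≤ 1) :
    ∫⁻ y, ENNReal.ofReal (V y ^ η) ∂μ ≤ ENNReal.ofReal ((1 - η) * u ^ η) +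
      ENNReal.ofReal (η * u ^ (η - 1)) * ∫⁻ y, ENNReal.ofReal (V y) ∂μ :=
  calc ∫⁻ y, ENNReal.ofReal (V y ^ η) ∂μ
      ≤ ∫⁻ y, ENNReal.ofReal ((1 - η) * u ^ η) +
          ENNReal.ofReal (η * u ^ (η - 1)) * ENNReal.ofReal (V y) ∂μ :=
        lintegral_mono fun y => by
          rw [← ENNReal.ofReal_mul (by positivity)]
          exact (ENNReal.ofReal_le_ofReal
            (rpow_le_tangent_line hu (hV0 y) hη0 hη1)).trans ENNReal.ofReal_add_le
    _ = _ := by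
        rw [lintegral_add_left measurable_const, lintegral_const_mul _ hV.ennreal_ofReal,
          lintegral_const, measure_univ, mul_one]

lemma lintegral_rpow_add_le_of_lintegral_le {μ : Measure X} [IsProbabilityMeasure μ]
    {V : X → ℝ} (hV : Measurable V) (hV1 : ∀ y, 1 ≤ V y)
    {u c α e η : ℝ} (hu : 1 ≤ u) (hc : 0 ≤ c) (hη0 : 0 ≤ η) (hη1 : η ≤ 1)
    (hdrift : ∫⁻ y, ENNReal.ofReal (V y) ∂μ ≤ ENNReal.ofReal (u - c * u ^ (1 - α) + e)) :
    ∫⁻ y, ENNReal.ofReal (V y ^ η) ∂μ + ENNReal.ofReal (η * c * u ^ (η - α)) ≤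
      ENNReal.ofReal (u ^ η) + ENNReal.ofReal e := by
  have hu0 : 0 < u := by linarith
  set R := u - c * u ^ (1 - α) + e
  set t := η * u ^ (η - 1)
  have ht0 : 0 ≤ t := by positivity
  have ht1 : t ≤ 1 :=
    mul_le_one₀ hη1 (by positivity) (Real.rpow_le_one_of_one_le_of_nonpos hu (by linarith))
  have hp : 0 ≤ (1 - η) * u ^ η := mul_nonneg (by linarith) (by positivity)
  have hR : 0 ≤ R := by
    have h1 : 1 ≤ ∫⁻ y, ENNReal.ofReal (V y) ∂μ :=
      calc (1 : ℝ≥0∞) = ∫⁻ _, 1 ∂μ := by simp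
        _ ≤ _ := lintegral_mono fun y => ENNReal.one_le_ofReal.2 (hV1 y)
    linarith [ENNReal.one_le_ofReal.1 (h1.trans hdrift)]
  -- the tangent slope `t = η u^(η-1)` turns the gain `c u^(1-α)` into `η c u^(η-α)`
  have hsum : (1 - η) * u ^ η + t * R + η * c * u ^ (η - α) = u ^ η + t * e := by
    have h1 : u ^ (η - 1) * u = u ^ η := by
      rw [Real.rpow_sub_one hu0.ne', div_mul_cancel₀ _ hu0.ne']
    have h2 : u ^ (η - 1) * u ^ (1 - α) = u ^ (η - α) := by
      rw [← Real.rpow_add hu0]; congr 1; ring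
    linear_combination η * h1 - η * c * h2
  calc ∫⁻ y, ENNReal.ofReal (V y ^ η) ∂μ + ENNReal.ofReal (η * c * u ^ (η - α))
      ≤ ENNReal.ofReal ((1 - η) * u ^ η) + ENNReal.ofReal t * ENNReal.ofReal R +
          ENNReal.ofReal (η * c * u ^ (η - α)) := by
        gcongr
        exact (lintegral_rpow_le_tangent_line hV (fun y => by linarith [hV1 y]) hu0 hη0
          hη1).trans (by gcongr)
    _ = ENNReal.ofReal (u ^ η + t * e) := by
        rw [← hsum, ← ENNReal.ofReal_mul ht0, ENNReal.ofReal_add (by positivity) (by positivity),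
          ENNReal.ofReal_add hp (by positivity)]
    _ ≤ ENNReal.ofReal (u ^ η) + ENNReal.ofReal t * ENNReal.ofReal e := by
        rw [← ENNReal.ofReal_mul ht0]
        exact ENNReal.ofReal_add_le
    _ ≤ ENNReal.ofReal (u ^ η) + ENNReal.ofReal e := by
        gcongr
        exact mul_le_of_le_one_left' (ENNReal.ofReal_le_one.2 ht1)

section Compat

variable {Pbar : ℕ → Kernel (X × Θ) (X × Θ)}

lemma Compat.lintegral_comp_fst {P : Θ → Kernel X X} (hcompat : Compat P Pbar)
    (l : ℕ) (x : X) (θ : Θ) {W : X → ℝ≥0∞} (hW : Measurable W) :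
    ∫⁻ z, W z.1 ∂(Pbar l (x, θ)) = ∫⁻ y, W y ∂(P θ x) := by
  have hmap : (Pbar l (x, θ)).map Prod.fst = P θ x := by
    ext A hA
    rw [Measure.map_apply measurable_fst hA, ← Set.prod_univ]
    exact hcompat l x θ A hA
  rw [← hmap, lintegral_map hW measurable_fst]

lemma Compat.lintegral_rpow_add_le_of_drift {P : Θ → Kernel X X} [∀ θ, IsMarkovKernel (P θ)]
    (hcompat : Compat P Pbar) {V : X → ℝ} (hV : Measurable V) (hV1 : ∀ x, 1 ≤ V x) {C : Set X}
    {α b c η : ℝ} (hc : 0 ≤ c) (hη0 : 0 ≤ η) (hη1 : η ≤ 1)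
    (hdrift : ∀ (θ : Θ) (x : X), ∫⁻ y, ENNReal.ofReal (V y) ∂(P θ x) ≤
      ENNReal.ofReal (V x - c * V x ^ (1 - α) + b * C.indicator (fun _ => (1 : ℝ)) x))
    (l : ℕ) (z : X × Θ) :
    ∫⁻ z', ENNReal.ofReal (V z'.1 ^ η) ∂(Pbar l z) + ENNReal.ofReal (η * c * V z.1 ^ (η - α)) ≤
      ENNReal.ofReal (V z.1 ^ η) + ENNReal.ofReal (b * C.indicator (fun _ => (1 : ℝ)) z.1) := by
  obtain ⟨x, θ⟩ := z
  rw [hcompat.lintegral_comp_fst l x θ (W := fun y => ENNReal.ofReal (V y ^ η)) (by fun_prop)]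
  exact lintegral_rpow_add_le_of_lintegral_le hV hV1 (hV1 x) hc hη0 hη1 (hdrift θ x)

end Compat

lemma measurable_prepend_s11 (z : X × Θ) : Measurable (prepend z) := by
  refine measurable_pi_lambda _ fun n => ?_
  cases n with
  | zero => exact measurable_const
  | succ n => exact measurable_pi_apply n

lemma pathFiltration_le (k : ℕ) :
    pathFiltration X Θ k ≤ (inferInstance : MeasurableSpace (ℕ → X × Θ)) :=
  (measurable_pi_lambda _ fun i => measurable_pi_apply i.1).comap_le

lemma pathFiltration_mono : Monotone (pathFiltration X Θ) := by
  intro j k hjk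
  rintro s ⟨t, ht, rfl⟩
  exact ⟨(fun v (i : Fin (j + 1)) => v ⟨i.1, by omega⟩) ⁻¹' t,
    (measurable_pi_lambda _ fun i => measurable_pi_apply _) ht, rfl⟩

lemma measurable_apply_pathFiltration {j k : ℕ} (hjk : j ≤ k) :
    Measurable[pathFiltration X Θ k] fun ω : ℕ → X × Θ => ω j :=
  (measurable_pi_apply (⟨j, by omega⟩ : Fin (k + 1))).comp
    (Measurable.of_comap_le (f := fun (ω : ℕ → X × Θ) (i : Fin (k + 1)) => ω i.1) le_rfl)

lemma measurable_prepend_pathFiltration (z : X × Θ) (k : ℕ) :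
    Measurable[pathFiltration X Θ k, pathFiltration X Θ (k + 1)] (prepend z) := by
  refine Measurable.of_comap_le ?_
  rw [show pathFiltration X Θ (k + 1) = MeasurableSpace.comap
    (fun ω (i : Fin (k + 2)) => ω i.1) inferInstance from rfl, MeasurableSpace.comap_comp]
  refine Measurable.comap_le
    ((@measurable_pi_iff _ _ _ (pathFiltration X Θ k) _ _).mpr ?_)
  rintro ⟨i, hi⟩
  cases i with
  | zero => exact measurable_const
  | succ n => exact measurable_apply_pathFiltration (by omega)

variable (X Θ) in
def naturalFiltration : Filtration ℕ (inferInstance : MeasurableSpace (ℕ → X × Θ)) where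
  seq := pathFiltration X Θ
  mono' := pathFiltration_mono
  le' := pathFiltration_le

section StoppingTimes

variable {τ : (ℕ → X × Θ) → ℕ∞}

lemma isPathStoppingTime_iff :
    IsPathStoppingTime τ ↔ IsStoppingTime (naturalFiltration X Θ) τ :=
  ⟨fun hτ => isStoppingTime_of_measurableSet_eq hτ, fun hτ k => hτ.measurableSet_eq_of_countable k⟩

lemma isStoppingTime_shiftStop (hτ : IsStoppingTime (naturalFiltration X Θ) τ) (z : X × Θ) :
    IsStoppingTime (naturalFiltration X Θ) (shiftStop τ z) := by
  intro k
  have hset : {ω | shiftStop τ z ω ≤ (k : WithTop ℕ)} =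
      prepend z ⁻¹' {ω | τ ω ≤ ((k + 1 : ℕ) : WithTop ℕ)} := by
    ext ω
    exact tsub_le_iff_right (α := ℕ∞)
  exact hset ▸ measurable_prepend_pathFiltration z k (hτ (k + 1))

lemma eq_zero_iff_of_apply_zero_eq (hτ : IsStoppingTime (naturalFiltration X Θ) τ)
    {ω₁ ω₂ : ℕ → X × Θ} (h : ω₁ 0 = ω₂ 0) : τ ω₁ = 0 ↔ τ ω₂ = 0 := by
  obtain ⟨t, -, ht⟩ := hτ.measurableSet_le 0
  have hmem : ∀ ω, τ ω = 0 ↔ (fun i : Fin 1 => ω i.1) ∈ t := fun ω => by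
    rw [← nonpos_iff_eq_zero]
    change _ ↔ ω ∈ (fun ω (i : Fin (0 + 1)) => ω i.1) ⁻¹' t
    rw [ht]
    exact Iff.rfl
  rw [hmem, hmem, show (fun i : Fin 1 => ω₁ i.1) = fun i : Fin 1 => ω₂ i.1 from
    funext fun i => by rw [Fin.fin_one_eq_zero i]; exact h]

lemma measurable_discountedSum (hτ : IsStoppingTime (naturalFiltration X Θ) τ) {r : ℝ≥0∞}
    {f : X × Θ → ℝ≥0∞} (hf : Measurable f) (n : ℕ) : Measurable (discountedSum τ r f n) :=
  Finset.measurable_sum _ fun j _ =>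
    Measurable.ite ((naturalFiltration X Θ).le j _ (hτ.measurableSet_gt j))
      (measurable_const.mul (hf.comp (measurable_pi_apply j))) measurable_const

end StoppingTimes

lemma IsAdaptiveLaw.lintegral_eq_lintegral_prepend {Pbar : ℕ → Kernel (X × Θ) (X × Θ)}
    {law : ℕ → X × Θ → Measure (ℕ → X × Θ)} (hlaw : IsAdaptiveLaw Pbar law) (l : ℕ) (z : X × Θ)
    {G : (ℕ → X × Θ) → ℝ≥0∞} (hG : Measurable G) :
    ∫⁻ ω, G ω ∂(law l z) = ∫⁻ z', ∫⁻ ω, G (prepend z ω) ∂(law (l + 1) z') ∂(Pbar l z) := by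
  have hmap : Measurable fun z' => (law (l + 1) z').map (prepend z) :=
    (Measure.measurable_map _ (measurable_prepend_s11 z)).comp (hlaw.meas (l + 1))
  rw [hlaw.step l z, Measure.lintegral_bind hmap.aemeasurable hG.aemeasurable]
  exact lintegral_congr fun z' => lintegral_map hG (measurable_prepend_s11 z)

section Comparison

variable {Pbar : ℕ → Kernel (X × Θ) (X × Θ)} [∀ n, IsMarkovKernel (Pbar n)]
  {law : ℕ → X × Θ → Measure (ℕ → X × Θ)}

lemma lintegral_discountedSum_succ (hlaw : IsAdaptiveLaw Pbar law)
    {τ : (ℕ → X × Θ) → ℕ∞} (hτ : IsStoppingTime (naturalFiltration X Θ) τ) {r : ℝ≥0∞}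
    {f : X × Θ → ℝ≥0∞} (hf : Measurable f) (n l : ℕ) (z : X × Θ) :
    ∫⁻ ω, discountedSum τ r f (n + 1) ω ∂(law l z) =
      if τ (fun _ => z) = 0 then 0 else
        f z + r * ∫⁻ z', ∫⁻ ω, discountedSum (shiftStop τ z) r f n ω ∂(law (l + 1) z')
          ∂(Pbar l z) := by
  have hzero : ∀ ω, τ (prepend z ω) = 0 ↔ τ (fun _ => z) = 0 :=
    fun ω => eq_zero_iff_of_apply_zero_eq hτ rfl
  have hS := measurable_discountedSum (r := r) (isStoppingTime_shiftStop hτ z) hf n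
  have hI : Measurable fun z' => ∫⁻ ω, discountedSum (shiftStop τ z) r f n ω ∂(law (l + 1) z') :=
    (Measure.measurable_lintegral hS).comp (hlaw.meas (l + 1))
  rw [hlaw.lintegral_eq_lintegral_prepend l z (measurable_discountedSum hτ hf _)]
  split_ifs with h0
  · simp [discountedSum_of_eq_zero ((hzero _).2 h0)]
  · have := hlaw.prob (l + 1)
    simp_rw [discountedSum_succ_prepend (mt (hzero _).1 h0), lintegral_add_left measurable_const,
      lintegral_const, measure_univ, mul_one, lintegral_const_mul _ hS]
    rw [lintegral_add_left measurable_const, lintegral_const, measure_univ, mul_one,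
      lintegral_const_mul _ hI]

theorem lintegral_discountedSum_le_of_drift (hlaw : IsAdaptiveLaw Pbar law)
    {W g h : X × Θ → ℝ≥0∞} (hW : Measurable W) (hg : Measurable g) (hh : Measurable h)
    {r : ℝ≥0∞} (hr : r ≤ 1) (hdrift : ∀ l z, ∫⁻ z', W z' ∂(Pbar l z) + g z ≤ W z + h z)
    (n l : ℕ) (z : X × Θ) {τ : (ℕ → X × Θ) → ℕ∞}
    (hτ : IsStoppingTime (naturalFiltration X Θ) τ) :
    ∫⁻ ω, discountedSum τ r (fun z => (1 - r) * W z + r * g z) n ω ∂(law l z) ≤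
      W z + ∫⁻ ω, discountedSum τ r h n ω ∂(law l z) := by
  induction n generalizing l z τ with
  | zero => simp [discountedSum]
  | succ n ih =>
    rw [lintegral_discountedSum_succ hlaw hτ (by fun_prop), lintegral_discountedSum_succ hlaw hτ hh]
    split_ifs
    · exact zero_le
    have hWz : (1 - r) * W z + r * W z = W z := by
      rw [← add_mul, tsub_add_cancel_of_le hr, one_mul]
    set H := ∫⁻ z', ∫⁻ ω, discountedSum (shiftStop τ z) r h n ω ∂(law (l + 1) z') ∂(Pbar l z)
    calc (1 - r) * W z + r * g z + r * ∫⁻ z', ∫⁻ ω, discountedSum (shiftStop τ z) r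
            (fun z => (1 - r) * W z + r * g z) n ω ∂(law (l + 1) z') ∂(Pbar l z)
        ≤ (1 - r) * W z + r * g z + r * ∫⁻ z', (W z' + ∫⁻ ω,
            discountedSum (shiftStop τ z) r h n ω ∂(law (l + 1) z')) ∂(Pbar l z) := by
          gcongr with z'
          exact ih (l + 1) z' (isStoppingTime_shiftStop hτ z)
      _ = (1 - r) * W z + r * (∫⁻ z', W z' ∂(Pbar l z) + g z) + r * H := by
          rw [lintegral_add_left hW]
          ring
      _ ≤ (1 - r) * W z + r * (W z + h z) + r * H := by
          gcongr (1 - r) * W z + r * ?_ + r * H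
          exact hdrift l z
      _ = ((1 - r) * W z + r * W z) + r * h z + r * H := by ring
      _ ≤ W z + (h z + r * H) := by
          rw [hWz, add_assoc]
          gcongr
          exact mul_le_of_le_one_left' hr

theorem lintegral_tsum_discounted_le_of_drift (hlaw : IsAdaptiveLaw Pbar law)
    {W g h : X × Θ → ℝ≥0∞} (hW : Measurable W) (hg : Measurable g) (hh : Measurable h)
    {r : ℝ≥0∞} (hr : r ≤ 1) (hdrift : ∀ l z, ∫⁻ z', W z' ∂(Pbar l z) + g z ≤ W z + h z)
    (l : ℕ) (z : X × Θ) {τ : (ℕ → X × Θ) → ℕ∞}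
    (hτ : IsStoppingTime (naturalFiltration X Θ) τ) :
    ∫⁻ ω, ∑' j : ℕ, (if (j : ℕ∞) < τ ω then r ^ j * ((1 - r) * W (ω j) + r * g (ω j)) else 0)
        ∂(law l z) ≤
      W z + ∫⁻ ω, ∑' j : ℕ, (if (j : ℕ∞) < τ ω then r ^ j * h (ω j) else 0) ∂(law l z) := by
  have hmono : ∀ f : X × Θ → ℝ≥0∞, Monotone fun n => discountedSum τ r f n :=
    fun f _ _ hmn _ => Finset.sum_le_sum_of_subset (Finset.range_mono hmn)
  calc _ = ∫⁻ ω, ⨆ n, discountedSum τ r (fun z => (1 - r) * W z + r * g z) n ω ∂(law l z) :=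
        lintegral_congr fun ω => ENNReal.tsum_eq_iSup_nat
    _ = ⨆ n, ∫⁻ ω, discountedSum τ r (fun z => (1 - r) * W z + r * g z) n ω ∂(law l z) :=
        lintegral_iSup (fun n => measurable_discountedSum hτ (by fun_prop) n) (hmono _)
    _ ≤ ⨆ n, (W z + ∫⁻ ω, discountedSum τ r h n ω ∂(law l z)) :=
        iSup_mono fun n => lintegral_discountedSum_le_of_drift hlaw hW hg hh hr hdrift n l z hτ
    _ ≤ _ := iSup_le fun n => by
        gcongr with ω
        exact ENNReal.sum_le_tsum _

theorem lintegral_tsum_discounted_rpow_le (hlaw : IsAdaptiveLaw Pbar law)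
    {V : X → ℝ} (hV : Measurable V) (hV1 : ∀ x, 1 ≤ V x) {h : X × Θ → ℝ≥0∞} (hh : Measurable h)
    {a α c β s : ℝ} (ha0 : 0 < a) (ha1 : a < 1) (hα : 0 < α) (hc : 0 < c) (hβ : 0 ≤ β)
    (hs0 : 0 ≤ s) (hs1 : s ≤ 1)
    (hdrift : ∀ l z, ∫⁻ z', ENNReal.ofReal (V z'.1 ^ (β + α * s)) ∂(Pbar l z) +
        ENNReal.ofReal ((β + α * s) * c * V z.1 ^ (β + α * s - α)) ≤
          ENNReal.ofReal (V z.1 ^ (β + α * s)) + h z)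
    (l : ℕ) (z : X × Θ) {τ : (ℕ → X × Θ) → ℕ∞} (hτ : IsStoppingTime (naturalFiltration X Θ) τ) :
    ∫⁻ ω, ∑' j : ℕ, (if (j : ℕ∞) < τ ω then ENNReal.ofReal ((1 - a) ^ j * V (ω j).1 ^ β) else 0)
        ∂(law l z) ≤
      ENNReal.ofReal (a ^ (s - 1) * (1 - a) ^ (-s) * (α * c) ^ (-s) * V z.1 ^ (β + α * s)) *
        (1 + ∫⁻ ω, ∑' j : ℕ, (if (j : ℕ∞) < τ ω then ENNReal.ofReal (1 - a) ^ j * h (ω j) else 0)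
          ∂(law l z)) := by
  set η := β + α * s
  set A := a ^ (s - 1) * (1 - a) ^ (-s) * (α * c) ^ (-s)
  set r := ENNReal.ofReal (1 - a)
  set W : X × Θ → ℝ≥0∞ := fun z => ENNReal.ofReal (V z.1 ^ η)
  set g : X × Θ → ℝ≥0∞ := fun z => ENNReal.ofReal (η * c * V z.1 ^ (η - α))
  have hterm : ∀ (j : ℕ) ω, (if (j : ℕ∞) < τ ω then ENNReal.ofReal ((1 - a) ^ j * V (ω j).1 ^ β)
      else 0) ≤ ENNReal.ofReal A *
        (if (j : ℕ∞) < τ ω then r ^ j * ((1 - r) * W (ω j) + r * g (ω j)) else 0) := by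
    intro j ω
    split_ifs
    · exact ofReal_pow_mul_rpow_le_young ha0 ha1 hα hc hβ hs0 hs1 (zero_lt_one.trans_le (hV1 _)) j
    · simp
  calc _ ≤ ∫⁻ ω, ENNReal.ofReal A * ∑' j : ℕ, (if (j : ℕ∞) < τ ω then
          r ^ j * ((1 - r) * W (ω j) + r * g (ω j)) else 0) ∂(law l z) :=
        lintegral_mono fun ω => (ENNReal.tsum_le_tsum (hterm · ω)).trans_eq ENNReal.tsum_mul_left
    _ = ENNReal.ofReal A * ∫⁻ ω, ∑' j : ℕ, (if (j : ℕ∞) < τ ω then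
          r ^ j * ((1 - r) * W (ω j) + r * g (ω j)) else 0) ∂(law l z) :=
        lintegral_const_mul' _ _ ENNReal.ofReal_ne_top
    _ ≤ ENNReal.ofReal A * (W z + ∫⁻ ω, ∑' j : ℕ, (if (j : ℕ∞) < τ ω then
          r ^ j * h (ω j) else 0) ∂(law l z)) := by
        gcongr
        exact lintegral_tsum_discounted_le_of_drift hlaw (by fun_prop) (by fun_prop) hh
          (ENNReal.ofReal_le_one.2 (by linarith)) hdrift l z hτ
    _ ≤ _ := by
        rw [ENNReal.ofReal_mul (p := A) (by positivity), mul_assoc]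
        gcongr ENNReal.ofReal A * ?_
        rw [mul_add, mul_one]
        exact add_le_add le_rfl (le_mul_of_one_le_left' (ENNReal.one_le_ofReal.2
          (Real.one_le_rpow (hV1 z.1) (by positivity))))

end Comparison

end AdaptiveMCMC

namespace AdaptiveMCMC

theorem discounted_moment_bound_general
    {X Θ : Type*} [MeasurableSpace X] [MeasurableSpace Θ]
    (P : Θ → Kernel X X) (hPm : ∀ θ, IsMarkovKernel (P θ))
    (Pbar : ℕ → Kernel (X × Θ) (X × Θ)) (hPbarm : ∀ n, IsMarkovKernel (Pbar n))
    (hcompat : Compat P Pbar)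
    (law : ℕ → X × Θ → Measure (ℕ → X × Θ)) (hlaw : IsAdaptiveLaw Pbar law)
    (V : X → ℝ) (hVmeas : Measurable V) (hV1 : ∀ x, 1 ≤ V x)
    (C : Set X) (hCmeas : MeasurableSet C)
    (α b c : ℝ) (hα0 : 0 < α) (hc : 0 < c)
    (hdrift : ∀ (θ : Θ) (x : X),
        (∫⁻ y, ENNReal.ofReal (V y) ∂(P θ x)) ≤
          ENNReal.ofReal (V x - c * V x ^ (1 - α) + b * C.indicator (fun _ => (1 : ℝ)) x)) :
    ∃ bb : ℝ, ∀ (β a : ℝ), 0 ≤ β → β ≤ 1 - α → 0 < a → a < 1 →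
      ∀ q : ℝ≥0∞, 1 ≤ q →
      ∀ (l : ℕ) (x : X) (θ : Θ) (τ : (ℕ → X × Θ) → ℕ∞), IsPathStoppingTime τ →
      (∫⁻ ω, ∑' j : ℕ, (if (j : ℕ∞) < τ ω then
          ENNReal.ofReal ((1 - a) ^ j * V ((ω j).1) ^ β) else 0) ∂(law l (x, θ))) ≤
        ENNReal.ofReal (a ^ ((q⁻¹).toReal - 1) * (1 - a) ^ (-(q⁻¹).toReal) *
            (α * c) ^ (-(q⁻¹).toReal) * V x ^ (β + α * (q⁻¹).toReal)) *
          (1 + ENNReal.ofReal bb *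
            ∫⁻ ω, ∑' j : ℕ, (if (j : ℕ∞) < τ ω ∧ (ω j).1 ∈ C then
              ENNReal.ofReal ((1 - a) ^ j) else 0) ∂(law l (x, θ))) := by
  refine ⟨b, fun β a hβ0 hβ1 ha0 ha1 q hq l x θ τ hτ => ?_⟩
  have hs0 : 0 ≤ (q⁻¹).toReal := ENNReal.toReal_nonneg
  have hs1 : (q⁻¹).toReal ≤ 1 :=
    ENNReal.toReal_le_of_le_ofReal zero_le_one (by simpa using ENNReal.inv_le_one.2 hq)
  have hC : ∀ ω : ℕ → X × Θ, ∑' j : ℕ, (if (j : ℕ∞) < τ ω then ENNReal.ofReal (1 - a) ^ j *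
        ENNReal.ofReal (b * C.indicator (fun _ => (1 : ℝ)) (ω j).1) else 0) =
      ENNReal.ofReal b * ∑' j : ℕ, (if (j : ℕ∞) < τ ω ∧ (ω j).1 ∈ C then
        ENNReal.ofReal ((1 - a) ^ j) else 0) := fun ω => by
    rw [← ENNReal.tsum_mul_left]
    refine tsum_congr fun j => ?_
    by_cases hj : (ω j).1 ∈ C <;>
      simp [hj, ENNReal.ofReal_pow (by linarith : 0 ≤ 1 - a), mul_comm]
  have := hPm
  have := hPbarm
  calc _ ≤ _ := lintegral_tsum_discounted_rpow_le hlaw hVmeas hV1 (by measurability)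
        ha0 ha1 hα0 hc hβ0 hs0 hs1
        (hcompat.lintegral_rpow_add_le_of_drift hVmeas hV1 hc.le (by positivity)
          (by nlinarith) hdrift) l (x, θ) (isPathStoppingTime_iff.1 hτ)
    _ = _ := by simp_rw [hC, lintegral_const_mul' _ _ ENNReal.ofReal_ne_top]

/-- Proposition 4.5(iii): discounted modulated moment bound under the drift condition. -/
theorem discounted_moment_bound
    {X Θ : Type*} [MeasurableSpace X] [MeasurableSpace Θ]
    (P : Θ → Kernel X X) (hPm : ∀ θ, IsMarkovKernel (P θ))
    (hPθmeas : ∀ (x : X) (A : Set X), MeasurableSet A → Measurable fun θ => P θ x A)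
    (Pbar : ℕ → Kernel (X × Θ) (X × Θ)) (hPbarm : ∀ n, IsMarkovKernel (Pbar n))
    (hcompat : Compat P Pbar)
    (law : ℕ → X × Θ → Measure (ℕ → X × Θ)) (hlaw : IsAdaptiveLaw Pbar law)
    (V : X → ℝ) (hVmeas : Measurable V) (hV1 : ∀ x, 1 ≤ V x)
    (C : Set X) (hCmeas : MeasurableSet C)
    (α b c : ℝ) (hα0 : 0 < α) (hα1 : α ≤ 1) (hb : 0 < b) (hc : 0 < c)
    (hdrift : ∀ (θ : Θ) (x : X),
        (∫⁻ y, ENNReal.ofReal (V y) ∂(P θ x)) ≤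
          ENNReal.ofReal (V x - c * V x ^ (1 - α) + b * C.indicator (fun _ => (1 : ℝ)) x)) :
    ∃ bb : ℝ, ∀ (β a : ℝ), 0 ≤ β → β ≤ 1 - α → 0 < a → a < 1 →
      ∀ q : ℝ≥0∞, 1 ≤ q →
      ∀ (l : ℕ) (x : X) (θ : Θ) (τ : (ℕ → X × Θ) → ℕ∞), IsPathStoppingTime τ →
      (∫⁻ ω, ∑' j : ℕ, (if (j : ℕ∞) < τ ω then
          ENNReal.ofReal ((1 - a) ^ j * V ((ω j).1) ^ β) else 0) ∂(law l (x, θ))) ≤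
        ENNReal.ofReal (a ^ ((q⁻¹).toReal - 1) * (1 - a) ^ (-(q⁻¹).toReal) *
            (α * c) ^ (-(q⁻¹).toReal) * V x ^ (β + α * (q⁻¹).toReal)) *
          (1 + ENNReal.ofReal bb *
            ∫⁻ ω, ∑' j : ℕ, (if (j : ℕ∞) < τ ω ∧ (ω j).1 ∈ C then
              ENNReal.ofReal ((1 - a) ^ j) else 0) ∂(law l (x, θ))) :=
  discounted_moment_bound_general P hPm Pbar hPbarm hcompat law hlaw V hVmeas hV1 C hCmeas α b c hα0
    hc hdrift

end AdaptiveMCMC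
end
end

section
/- Let {D_{n,i} : 1 ≤ i ≤ n, n ≥ 1} be a martingale-difference array adapted to a fixed filtration {F_i : i ≥ 0} (i.e. D_{n,i} is F_i-measurable, integrable, and E[D_{n,i} | F_{i−1}] = 0 for all 1 ≤ i ≤ n), and let {c_n : n ≥ 1} be a non-increasing sequence of positive numbers. Define S_{n,k} := Σ_{i=1}^k D_{n,i} for 1 ≤ k ≤ n, and S_{n,k} := Σ_{i=1}^n D_{n,i} + Σ_{j=n+1}^k D_{j,j} for k > n; and R_n := Σ_{j=1}^{n−1} (D_{n,j} − D_{n−1,j}). Then for all integers n ≤ N, all p ≥ 1 and all λ > 0: 2^{−p} λ^p P( max_{n ≤ m ≤ N} c_m |S_{m,m}| > λ ) ≤ c_N^p E[|S_{n,N}|^p] + Σ_{j=n}^{N−1} (c_j^p − c_{j+1}^p) E[|S_{n,j}|^p] + E[ ( Σ_{j=n+1}^N c_j |R_j| )^p ]. -/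
/-!
Telescoping gives `S_{m,m} = S_{n,m} + Σ_{j=n+1}^m R_j`, and since `c` is non-increasing,
`c_m |S_{m,m}| ≤ c_m |S_{n,m}| + Σ_{j=n+1}^N c_j |R_j|`. So the event at level `λ` lies in the
union of a maximal event at level `λ/2` for `k ↦ S_{n,k}`, which is a martingale on `k ≥ n` (only
the diagonal entries `D_{k,k}` are added), and a Markov event for the remainder. The maximal event is
handled by Chow's weighted maximal inequality for `Y_k = |S_{n,k}|^p`, proved by induction on `N`
from the one-step submartingale property `∫_A Y_k ≤ ∫_A Y_{k+1}` for `A ∈ F_k`, which is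
conditional Jensen in `L^p`.
-/

open MeasureTheory ProbabilityTheory Filter
open scoped ENNReal NNReal

noncomputable section

namespace ChowBirnbaumMarshall

variable {Ω : Type*} {mΩ : MeasurableSpace Ω}

/-- `S_{n,k} = Σ_{i=1}^k D_{n,i}` for `k ≤ n`, and
`S_{n,k} = Σ_{i=1}^n D_{n,i} + Σ_{j=n+1}^k D_{j,j}` for `k > n`. -/
def Sarr (D : ℕ → ℕ → Ω → ℝ) (n k : ℕ) (ω : Ω) : ℝ :=
  if k ≤ n then ∑ i ∈ Finset.Icc 1 k, D n i ω
  else (∑ i ∈ Finset.Icc 1 n, D n i ω) + ∑ j ∈ Finset.Icc (n + 1) k, D j j ω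

/-- `R_n = Σ_{j=1}^{n−1} (D_{n,j} − D_{n−1,j})`. -/
def Rarr (D : ℕ → ℕ → Ω → ℝ) (n : ℕ) (ω : Ω) : ℝ :=
  ∑ j ∈ Finset.Icc 1 (n - 1), (D n j ω - D (n - 1) j ω)

theorem setLIntegral_enorm_rpow_condExp_le {E : Type*} [NormedAddCommGroup E]
    [NormedSpace ℝ E] [CompleteSpace E] {m : MeasurableSpace Ω} {μ : Measure[mΩ] Ω} (hm : m ≤ mΩ)
    {f : Ω → E} (hf : Integrable f μ) {s : Set Ω} (hs : MeasurableSet[m] s) {p : ℝ}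
    (hp : 1 ≤ p) :
    ∫⁻ ω in s, ‖μ[f | m] ω‖ₑ ^ p ∂μ ≤ ∫⁻ ω in s, ‖f ω‖ₑ ^ p ∂μ := by
  have hp' : p.toNNReal ≠ 0 := by simp only [ne_eq, Real.toNNReal_eq_zero, not_le]; linarith
  have hnorm : eLpNorm (μ[f | m]) p.toNNReal (μ.restrict s) ≤
      eLpNorm f p.toNNReal (μ.restrict s) := by
    rw [← eLpNorm_indicator_eq_eLpNorm_restrict (μ := μ) (hm s hs),
      ← eLpNorm_indicator_eq_eLpNorm_restrict (μ := μ) (hm s hs),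
      ← eLpNorm_congr_ae (condExp_indicator hf hs)]
    exact eLpNorm_condExp_le_eLpNorm _ (by exact_mod_cast Real.one_le_toNNReal.mpr hp)
  have hpow := ENNReal.rpow_le_rpow hnorm p.toNNReal.coe_nonneg
  rwa [eLpNorm_nnreal_pow_eq_lintegral hp', eLpNorm_nnreal_pow_eq_lintegral hp',
    Real.coe_toNNReal _ (by linarith)] at hpow

theorem ofReal_abs_rpow (x : ℝ) {p : ℝ} (hp : 0 ≤ p) :
    ENNReal.ofReal (|x| ^ p) = ‖x‖ₑ ^ p := by
  rw [Real.enorm_eq_ofReal_abs, ENNReal.ofReal_rpow_of_nonneg (abs_nonneg x) hp]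

theorem mul_measure_lt_le_lintegral_rpow {μ : Measure Ω} {f : Ω → ℝ} (hf : Measurable f)
    {a p : ℝ} (ha : 0 ≤ a) (hp : 0 ≤ p) :
    ENNReal.ofReal (a ^ p) * μ {ω | a < f ω} ≤ ∫⁻ ω, ENNReal.ofReal (f ω ^ p) ∂μ :=
  calc ENNReal.ofReal (a ^ p) * μ {ω | a < f ω}
      ≤ ENNReal.ofReal (a ^ p) * μ {ω | ENNReal.ofReal (a ^ p) ≤ ENNReal.ofReal (f ω ^ p)} := by
        gcongr
        exact fun hω => ENNReal.ofReal_le_ofReal (Real.rpow_le_rpow ha hω.le hp)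
    _ ≤ ∫⁻ ω, ENNReal.ofReal (f ω ^ p) ∂μ :=
        mul_meas_ge_le_lintegral₀ (hf.pow_const p).ennreal_ofReal.aemeasurable _

theorem mul_measure_le_mul_setLIntegral {μ : Measure Ω} {s : Set Ω} (hs : MeasurableSet s)
    {t β : ℝ≥0∞} {f : Ω → ℝ≥0∞} (hf : Measurable f) (h : ∀ ω ∈ s, t ≤ β * f ω) :
    t * μ s ≤ β * ∫⁻ ω in s, f ω ∂μ :=
  calc t * μ s = ∫⁻ _ in s, t ∂μ := (setLIntegral_const s t).symm
    _ ≤ ∫⁻ ω in s, β * f ω ∂μ := setLIntegral_mono' hs h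
    _ = β * ∫⁻ ω in s, f ω ∂μ := lintegral_const_mul β hf

def exceedSet (b : ℕ → ℝ≥0∞) (Y : ℕ → Ω → ℝ≥0∞) (t : ℝ≥0∞) (n N : ℕ) : Set Ω :=
  {ω | ∃ m, n ≤ m ∧ m ≤ N ∧ t < b m * Y m ω}

section Chow

variable {b : ℕ → ℝ≥0∞} {Y : ℕ → Ω → ℝ≥0∞} {t : ℝ≥0∞} {n : ℕ}

theorem exceedSet_self : exceedSet b Y t n n = {ω | t < b n * Y n ω} := by
  ext ω
  constructor
  · rintro ⟨m, hnm, hmn, h⟩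
    obtain rfl : m = n := le_antisymm hmn hnm
    exact h
  · exact fun h => ⟨n, le_rfl, le_rfl, h⟩

theorem exceedSet_succ {N : ℕ} (hnN : n ≤ N + 1) :
    exceedSet b Y t n (N + 1) = exceedSet b Y t n N ∪ {ω | t < b (N + 1) * Y (N + 1) ω} := by
  ext ω
  constructor
  · rintro ⟨m, hnm, hmN, h⟩
    rcases hmN.lt_or_eq with hmN | rfl
    · exact Or.inl ⟨m, hnm, Nat.le_of_lt_succ hmN, h⟩
    · exact Or.inr h
  · rintro (⟨m, hnm, hmN, h⟩ | h)
    · exact ⟨m, hnm, hmN.trans N.le_succ, h⟩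
    · exact ⟨N + 1, hnN, le_rfl, h⟩

theorem measurableSet_exceedSet {ℱ : Filtration ℕ mΩ}
    (hY : ∀ j, n ≤ j → Measurable[ℱ j] (Y j)) (N : ℕ) :
    MeasurableSet[ℱ N] (exceedSet b Y t n N) := by
  have hunion : exceedSet b Y t n N = ⋃ m ∈ Finset.Icc n N, {ω | t < b m * Y m ω} := by
    ext ω
    simp [exceedSet, and_assoc]
  rw [hunion]
  refine Finset.measurableSet_biUnion _ fun m hm => ?_
  obtain ⟨hnm, hmN⟩ := Finset.mem_Icc.mp hm
  exact measurableSet_lt measurable_const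
    (((hY m hnm).mono (ℱ.mono hmN) le_rfl).const_mul _)

theorem weighted_maximal_ineq_setLIntegral {μ : Measure Ω} {ℱ : Filtration ℕ mΩ}
    (hb : Antitone b) (hY : ∀ j, n ≤ j → Measurable[ℱ j] (Y j))
    (hsub : ∀ m, n ≤ m → ∀ s, MeasurableSet[ℱ m] s →
      ∫⁻ ω in s, Y m ω ∂μ ≤ ∫⁻ ω in s, Y (m + 1) ω ∂μ)
    {N : ℕ} (hnN : n ≤ N) :
    t * μ (exceedSet b Y t n N) ≤
      b N * ∫⁻ ω in exceedSet b Y t n N, Y N ω ∂μ +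
        ∑ j ∈ Finset.Ico n N, (b j - b (j + 1)) * ∫⁻ ω in exceedSet b Y t n j, Y j ω ∂μ := by
  have hmeas : ∀ j, n ≤ j → Measurable (Y j) := fun j hj => (hY j hj).mono (ℱ.le j) le_rfl
  have hE : ∀ j, MeasurableSet (exceedSet b Y t n j) := fun j =>
    ℱ.le j _ (measurableSet_exceedSet hY j)
  induction N, hnN using Nat.le_induction with
  | base =>
    rw [Finset.Ico_self, Finset.sum_empty, add_zero]
    refine mul_measure_le_mul_setLIntegral (hE n) (hmeas n le_rfl) fun ω hω => ?_
    rw [exceedSet_self] at hω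
    exact hω.le
  | succ N hnN ih =>
    set E := exceedSet b Y t n N
    set A := {ω | t < b (N + 1) * Y (N + 1) ω} \ E
    have hA : MeasurableSet A :=
      (measurableSet_lt measurable_const ((hmeas _ (hnN.trans N.le_succ)).const_mul _)).diff (hE N)
    have hunion : exceedSet b Y t n (N + 1) = E ∪ A := by
      rw [exceedSet_succ (hnN.trans N.le_succ), Set.union_sdiff_self]
    have hdisj : Disjoint E A := Set.disjoint_sdiff_right
    have hA_bound : t * μ A ≤ b (N + 1) * ∫⁻ ω in A, Y (N + 1) ω ∂μ :=
      mul_measure_le_mul_setLIntegral hA (hmeas _ (hnN.trans N.le_succ)) fun ω hω => hω.1.le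
    have hweight : b N * ∫⁻ ω in E, Y N ω ∂μ = b (N + 1) * ∫⁻ ω in E, Y N ω ∂μ +
        (b N - b (N + 1)) * ∫⁻ ω in E, Y N ω ∂μ := by
      rw [← add_mul, add_tsub_cancel_of_le (hb N.le_succ)]
    calc t * μ (exceedSet b Y t n (N + 1))
        ≤ t * μ E + t * μ A := by
          rw [hunion, ← mul_add]; gcongr; exact measure_union_le _ _
      _ ≤ (b N * ∫⁻ ω in E, Y N ω ∂μ +
            ∑ j ∈ Finset.Ico n N, (b j - b (j + 1)) * ∫⁻ ω in exceedSet b Y t n j, Y j ω ∂μ) +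
          b (N + 1) * ∫⁻ ω in A, Y (N + 1) ω ∂μ := add_le_add ih hA_bound
      _ = b (N + 1) * (∫⁻ ω in E, Y N ω ∂μ + ∫⁻ ω in A, Y (N + 1) ω ∂μ) +
          ∑ j ∈ Finset.Ico n (N + 1),
            (b j - b (j + 1)) * ∫⁻ ω in exceedSet b Y t n j, Y j ω ∂μ := by
          rw [Finset.sum_Ico_succ_top hnN, hweight]
          ring
      _ ≤ b (N + 1) * ∫⁻ ω in exceedSet b Y t n (N + 1), Y (N + 1) ω ∂μ +
          ∑ j ∈ Finset.Ico n (N + 1),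
            (b j - b (j + 1)) * ∫⁻ ω in exceedSet b Y t n j, Y j ω ∂μ := by
          rw [hunion, lintegral_union hA hdisj]
          gcongr b (N + 1) * (?_ + _) + _
          exact hsub N hnN E (measurableSet_exceedSet hY N)

theorem weighted_maximal_ineq {μ : Measure Ω} {ℱ : Filtration ℕ mΩ}
    (hb : Antitone b) (hY : ∀ j, n ≤ j → Measurable[ℱ j] (Y j))
    (hsub : ∀ m, n ≤ m → ∀ s, MeasurableSet[ℱ m] s →
      ∫⁻ ω in s, Y m ω ∂μ ≤ ∫⁻ ω in s, Y (m + 1) ω ∂μ)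
    {N : ℕ} (hnN : n ≤ N) :
    t * μ (exceedSet b Y t n N) ≤
      b N * ∫⁻ ω, Y N ω ∂μ + ∑ j ∈ Finset.Ico n N, (b j - b (j + 1)) * ∫⁻ ω, Y j ω ∂μ := by
  refine (weighted_maximal_ineq_setLIntegral hb hY hsub hnN).trans ?_
  gcongr <;> exact Measure.restrict_le_self

end Chow

section Arrays

variable {D : ℕ → ℕ → Ω → ℝ}

theorem Sarr_self (D : ℕ → ℕ → Ω → ℝ) (k : ℕ) :
    Sarr D k k = fun ω => ∑ i ∈ Finset.Icc 1 k, D k i ω := by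
  ext ω
  simp [Sarr]

theorem Sarr_succ (D : ℕ → ℕ → Ω → ℝ) {n k : ℕ} (hnk : n ≤ k) :
    Sarr D n (k + 1) = Sarr D n k + D (k + 1) (k + 1) := by
  ext ω
  rcases hnk.lt_or_eq with hnk | rfl
  · simp only [Sarr, hnk.not_ge, (hnk.trans k.lt_succ_self).not_ge, if_false, Pi.add_apply,
      Finset.sum_Icc_succ_top (Nat.succ_le_succ hnk.le)]
    ring
  · simp [Sarr]

theorem Sarr_self_succ (D : ℕ → ℕ → Ω → ℝ) (k : ℕ) :
    Sarr D (k + 1) (k + 1) = Sarr D k k + D (k + 1) (k + 1) + Rarr D (k + 1) := by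
  ext ω
  simp only [Sarr_self, Rarr, Pi.add_apply, Nat.add_sub_cancel, Finset.sum_sub_distrib,
    Finset.sum_Icc_succ_top (Nat.le_add_left 1 k)]
  ring

theorem Sarr_self_eq_add_sum_Rarr (D : ℕ → ℕ → Ω → ℝ) {n m : ℕ} (hnm : n ≤ m) :
    Sarr D m m = Sarr D n m + ∑ j ∈ Finset.Ioc n m, Rarr D j := by
  induction m, hnm using Nat.le_induction with
  | base => simp
  | succ m hnm ih =>
    rw [Sarr_self_succ, ih, Sarr_succ D hnm, Finset.sum_Ioc_succ_top hnm]
    abel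

theorem stronglyMeasurable_Sarr {ℱ : Filtration ℕ mΩ}
    (hadapt : ∀ n i : ℕ, 1 ≤ i → i ≤ n → StronglyMeasurable[ℱ i] (D n i))
    {n k : ℕ} (hnk : n ≤ k) : StronglyMeasurable[ℱ k] (Sarr D n k) := by
  induction k, hnk using Nat.le_induction with
  | base =>
    rw [Sarr_self]
    refine Finset.stronglyMeasurable_fun_sum _ fun i hi => ?_
    obtain ⟨h1i, hin⟩ := Finset.mem_Icc.mp hi
    exact (hadapt n i h1i hin).mono (ℱ.mono hin)
  | succ k hnk ih =>
    rw [Sarr_succ D hnk]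
    exact (ih.mono (ℱ.mono k.le_succ)).add (hadapt _ _ (Nat.le_add_left 1 k) le_rfl)

theorem integrable_Sarr {μ : Measure Ω}
    (hint : ∀ n i : ℕ, 1 ≤ i → i ≤ n → Integrable (D n i) μ)
    {n k : ℕ} (hnk : n ≤ k) : Integrable (Sarr D n k) μ := by
  induction k, hnk using Nat.le_induction with
  | base =>
    rw [Sarr_self]
    exact integrable_finsetSum _ fun i hi =>
      hint n i (Finset.mem_Icc.mp hi).1 (Finset.mem_Icc.mp hi).2
  | succ k hnk ih =>
    rw [Sarr_succ D hnk]
    exact ih.add (hint _ _ (Nat.le_add_left 1 k) le_rfl)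

theorem condExp_Sarr_succ {μ : Measure Ω} [IsFiniteMeasure μ] {ℱ : Filtration ℕ mΩ}
    (hadapt : ∀ n i : ℕ, 1 ≤ i → i ≤ n → StronglyMeasurable[ℱ i] (D n i))
    (hint : ∀ n i : ℕ, 1 ≤ i → i ≤ n → Integrable (D n i) μ)
    (hmds : ∀ n i : ℕ, 1 ≤ i → i ≤ n → μ[D n i | ℱ (i - 1)] =ᵐ[μ] 0)
    {n k : ℕ} (hnk : n ≤ k) :
    μ[Sarr D n (k + 1) | ℱ k] =ᵐ[μ] Sarr D n k := by
  have hD : μ[D (k + 1) (k + 1) | ℱ k] =ᵐ[μ] 0 := hmds _ _ (Nat.le_add_left 1 k) le_rfl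
  rw [Sarr_succ D hnk]
  filter_upwards [condExp_add (integrable_Sarr hint hnk) (hint _ _ (Nat.le_add_left 1 k) le_rfl)
    (ℱ k), hD] with ω hadd hzero
  rw [hadd, Pi.add_apply, hzero, condExp_of_stronglyMeasurable (ℱ.le k)
    (stronglyMeasurable_Sarr hadapt hnk) (integrable_Sarr hint hnk)]
  simp

theorem measurable_Rarr
    (hmeas : ∀ n i : ℕ, 1 ≤ i → i ≤ n → Measurable (D n i)) (j : ℕ) :
    Measurable (Rarr D j) := by
  refine Finset.measurable_fun_sum _ fun i hi => ?_
  obtain ⟨h1i, hij⟩ := Finset.mem_Icc.mp hi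
  exact (hmeas j i h1i (hij.trans (Nat.sub_le j 1))).sub (hmeas (j - 1) i h1i hij)

theorem mul_abs_Sarr_self_le {c : ℕ → ℝ} (hc : ∀ j, 0 ≤ c j) (hcdec : Antitone c)
    {n m N : ℕ} (hnm : n ≤ m) (hmN : m ≤ N) (ω : Ω) :
    c m * |Sarr D m m ω| ≤
      c m * |Sarr D n m ω| + ∑ j ∈ Finset.Icc (n + 1) N, c j * |Rarr D j ω| := by
  rw [Sarr_self_eq_add_sum_Rarr D hnm, Pi.add_apply, Finset.sum_apply]
  calc c m * |Sarr D n m ω + ∑ j ∈ Finset.Ioc n m, Rarr D j ω|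
      ≤ c m * (|Sarr D n m ω| + ∑ j ∈ Finset.Ioc n m, |Rarr D j ω|) := by
        refine mul_le_mul_of_nonneg_left ?_ (hc m)
        exact le_trans (abs_add_le _ _) (add_le_add_right (Finset.abs_sum_le_sum_abs _ _) _)
    _ = c m * |Sarr D n m ω| + ∑ j ∈ Finset.Ioc n m, c m * |Rarr D j ω| := by
        rw [mul_add, Finset.mul_sum]
    _ ≤ c m * |Sarr D n m ω| + ∑ j ∈ Finset.Ioc n m, c j * |Rarr D j ω| := by
        gcongr with j hj
        exact hcdec (Finset.mem_Ioc.mp hj).2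
    _ ≤ c m * |Sarr D n m ω| + ∑ j ∈ Finset.Icc (n + 1) N, c j * |Rarr D j ω| := by
        refine add_le_add_right (Finset.sum_le_sum_of_subset_of_nonneg (fun j hj => ?_)
          fun j _ _ => mul_nonneg (hc j) (abs_nonneg _)) _
        rw [Finset.mem_Ioc] at hj
        rw [Finset.mem_Icc]
        omega

theorem setOf_lt_mul_abs_Sarr_self_subset {c : ℕ → ℝ} (hc : ∀ j, 0 ≤ c j) (hcdec : Antitone c)
    (n N : ℕ) (lam : ℝ) :
    {ω | ∃ m, n ≤ m ∧ m ≤ N ∧ lam < c m * |Sarr D m m ω|} ⊆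
      {ω | ∃ m, n ≤ m ∧ m ≤ N ∧ lam / 2 < c m * |Sarr D n m ω|} ∪
        {ω | lam / 2 < ∑ j ∈ Finset.Icc (n + 1) N, c j * |Rarr D j ω|} := by
  rintro ω ⟨m, hnm, hmN, hlam⟩
  have hsplit := mul_abs_Sarr_self_le (D := D) hc hcdec hnm hmN ω
  rcases lt_or_ge (lam / 2) (c m * |Sarr D n m ω|) with h | h
  · exact Or.inl ⟨m, hnm, hmN, h⟩
  · exact Or.inr (show lam / 2 < _ by linarith)

end Arrays

section Martingale

variable {μ : Measure Ω} [IsFiniteMeasure μ] {ℱ : Filtration ℕ mΩ} {D : ℕ → ℕ → Ω → ℝ}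

theorem setLIntegral_abs_Sarr_rpow_le_succ
    (hadapt : ∀ n i : ℕ, 1 ≤ i → i ≤ n → StronglyMeasurable[ℱ i] (D n i))
    (hint : ∀ n i : ℕ, 1 ≤ i → i ≤ n → Integrable (D n i) μ)
    (hmds : ∀ n i : ℕ, 1 ≤ i → i ≤ n → μ[D n i | ℱ (i - 1)] =ᵐ[μ] 0)
    {n k : ℕ} (hnk : n ≤ k) {s : Set Ω} (hs : MeasurableSet[ℱ k] s) {p : ℝ} (hp : 1 ≤ p) :
    ∫⁻ ω in s, ENNReal.ofReal (|Sarr D n k ω| ^ p) ∂μ ≤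
      ∫⁻ ω in s, ENNReal.ofReal (|Sarr D n (k + 1) ω| ^ p) ∂μ := by
  simp only [ofReal_abs_rpow _ (zero_le_one.trans hp)]
  calc ∫⁻ ω in s, ‖Sarr D n k ω‖ₑ ^ p ∂μ
      = ∫⁻ ω in s, ‖μ[Sarr D n (k + 1) | ℱ k] ω‖ₑ ^ p ∂μ := by
        refine lintegral_congr_ae (ae_restrict_of_ae ?_)
        filter_upwards [condExp_Sarr_succ hadapt hint hmds hnk] with ω hω
        rw [hω]
    _ ≤ ∫⁻ ω in s, ‖Sarr D n (k + 1) ω‖ₑ ^ p ∂μ :=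
        setLIntegral_enorm_rpow_condExp_le (ℱ.le k)
          (integrable_Sarr hint (hnk.trans k.le_succ)) hs hp

theorem maximal_ineq_Sarr
    (hadapt : ∀ n i : ℕ, 1 ≤ i → i ≤ n → StronglyMeasurable[ℱ i] (D n i))
    (hint : ∀ n i : ℕ, 1 ≤ i → i ≤ n → Integrable (D n i) μ)
    (hmds : ∀ n i : ℕ, 1 ≤ i → i ≤ n → μ[D n i | ℱ (i - 1)] =ᵐ[μ] 0)
    {c : ℕ → ℝ} (hc : ∀ j, 0 ≤ c j) (hcdec : Antitone c)
    {n N : ℕ} (hnN : n ≤ N) {p : ℝ} (hp : 1 ≤ p) {a : ℝ} (ha : 0 ≤ a) :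
    ENNReal.ofReal (a ^ p) * μ {ω | ∃ m, n ≤ m ∧ m ≤ N ∧ a < c m * |Sarr D n m ω|} ≤
      ENNReal.ofReal (c N ^ p) * ∫⁻ ω, ENNReal.ofReal (|Sarr D n N ω| ^ p) ∂μ +
        ∑ j ∈ Finset.Ico n N, ENNReal.ofReal (c j ^ p - c (j + 1) ^ p) *
          ∫⁻ ω, ENNReal.ofReal (|Sarr D n j ω| ^ p) ∂μ := by
  have hp0 : 0 < p := zero_lt_one.trans_le hp
  set b : ℕ → ℝ≥0∞ := fun j => ENNReal.ofReal (c j ^ p)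
  set Y : ℕ → Ω → ℝ≥0∞ := fun j ω => ENNReal.ofReal (|Sarr D n j ω| ^ p)
  have hevent : {ω | ∃ m, n ≤ m ∧ m ≤ N ∧ a < c m * |Sarr D n m ω|} ⊆
      exceedSet b Y (ENNReal.ofReal (a ^ p)) n N := by
    rintro ω ⟨m, hnm, hmN, h⟩
    refine ⟨m, hnm, hmN, ?_⟩
    rw [← ENNReal.ofReal_mul (Real.rpow_nonneg (hc m) p), ← Real.mul_rpow (hc m) (abs_nonneg _)]
    exact (ENNReal.ofReal_lt_ofReal_iff (Real.rpow_pos_of_pos (ha.trans_lt h) p)).2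
      (Real.rpow_lt_rpow ha h hp0)
  have hweights : ∀ j, b j - b (j + 1) = ENNReal.ofReal (c j ^ p - c (j + 1) ^ p) := fun j =>
    (ENNReal.ofReal_sub _ (Real.rpow_nonneg (hc (j + 1)) p)).symm
  calc _ ≤ ENNReal.ofReal (a ^ p) * μ (exceedSet b Y (ENNReal.ofReal (a ^ p)) n N) := by
        gcongr
    _ ≤ b N * ∫⁻ ω, Y N ω ∂μ + ∑ j ∈ Finset.Ico n N, (b j - b (j + 1)) * ∫⁻ ω, Y j ω ∂μ :=
        weighted_maximal_ineq
          (fun i j hij => ENNReal.ofReal_le_ofReal (Real.rpow_le_rpow (hc j) (hcdec hij) hp0.le))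
          (fun j hj => (by fun_prop : Measurable fun x : ℝ => ENNReal.ofReal (|x| ^ p)).comp
            (stronglyMeasurable_Sarr hadapt hj).measurable)
          (fun k hk s hs => setLIntegral_abs_Sarr_rpow_le_succ hadapt hint hmds hk hs hp) hnN
    _ = _ := by simp only [hweights, b, Y]

end Martingale

/-- Lemma B.2 (a martingale-array extension of the Chow–Birnbaum–Marshall inequality). -/
theorem chow_birnbaum_marshall
    (μ : Measure Ω) [IsProbabilityMeasure μ]
    (ℱ : Filtration ℕ mΩ) (D : ℕ → ℕ → Ω → ℝ)
    (hadapt : ∀ n i : ℕ, 1 ≤ i → i ≤ n → StronglyMeasurable[ℱ i] (D n i))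
    (hint : ∀ n i : ℕ, 1 ≤ i → i ≤ n → Integrable (D n i) μ)
    (hmds : ∀ n i : ℕ, 1 ≤ i → i ≤ n → μ[D n i | ℱ (i - 1)] =ᵐ[μ] 0)
    (c : ℕ → ℝ) (hcpos : ∀ n, 0 < c n) (hcdec : Antitone c)
    (n N : ℕ) (hnN : n ≤ N) (p : ℝ) (hp : 1 ≤ p) (lam : ℝ) (hlam : 0 < lam) :
    ENNReal.ofReal (2 ^ (-p) * lam ^ p) *
        μ {ω | ∃ m : ℕ, n ≤ m ∧ m ≤ N ∧ lam < c m * |Sarr D m m ω|} ≤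
      ENNReal.ofReal (c N ^ p) *
          (∫⁻ ω, ENNReal.ofReal (|Sarr D n N ω| ^ p) ∂μ) +
        (∑ j ∈ Finset.Ico n N, ENNReal.ofReal (c j ^ p - c (j + 1) ^ p) *
          ∫⁻ ω, ENNReal.ofReal (|Sarr D n j ω| ^ p) ∂μ) +
        ∫⁻ ω, ENNReal.ofReal ((∑ j ∈ Finset.Icc (n + 1) N, c j * |Rarr D j ω|) ^ p) ∂μ := by
  have hc : ∀ j, 0 ≤ c j := fun j => (hcpos j).le
  have hconst : 2 ^ (-p) * lam ^ p = (lam / 2) ^ p := by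
    rw [Real.div_rpow hlam.le zero_le_two, Real.rpow_neg zero_le_two, div_eq_inv_mul]
  have hremainder : Measurable fun ω => ∑ j ∈ Finset.Icc (n + 1) N, c j * |Rarr D j ω| :=
    Finset.measurable_fun_sum _ fun j _ => (measurable_Rarr (fun k i h1 h2 =>
      ((hadapt k i h1 h2).mono (ℱ.le i)).measurable) j).abs.const_mul _
  rw [hconst]
  calc _ ≤ ENNReal.ofReal ((lam / 2) ^ p) *
          (μ {ω | ∃ m, n ≤ m ∧ m ≤ N ∧ lam / 2 < c m * |Sarr D n m ω|} +
            μ {ω | lam / 2 < ∑ j ∈ Finset.Icc (n + 1) N, c j * |Rarr D j ω|}) := by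
        gcongr
        exact (measure_mono (setOf_lt_mul_abs_Sarr_self_subset hc hcdec n N lam)).trans
          (measure_union_le _ _)
    _ ≤ _ := by
        rw [mul_add]
        exact add_le_add (maximal_ineq_Sarr hadapt hint hmds hc hcdec hnN hp (by positivity))
          (mul_measure_lt_le_lintegral_rpow hremainder (by positivity) (by positivity))

end ChowBirnbaumMarshall
end
end
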